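/- arXiv:1004.2452 — 3 statements merged into one kernel-verified Lean document; each statement's English description precedes it below -/
import Mathlib

section
/- For A ⊆ {1,...,n} let H_A denote the set of operators K ∈ L²(ρ^{⊗A}) such that E(K|B) = 0 for every subset B ⊆ {1,...,n} with |B| < |A|. Then for any two distinct subsets A ≠ B of {1,...,n}, the subspaces H_A and H_B are orthogonal in L²(ρ^{⊗n}): Tr(ρ^{⊗n} K* K') = 0 for every K ∈ H_A and K' ∈ H_B. -/
open scoped BigOperators
open Matrix
open scoped ComplexOrder

/-- The tensor product `M 0 ⊗ M 1 ⊗ ... ⊗ M (n-1)` of a family of `d × d` matrices,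
realized as a matrix indexed by multi-indices `Fin n → Fin d`. -/
noncomputable def tensorFam {d n : ℕ} (M : Fin n → Matrix (Fin d) (Fin d) ℂ) :
    Matrix (Fin n → Fin d) (Fin n → Fin d) ℂ :=
  Matrix.of fun x y => ∏ i, M i (x i) (y i)

/-- The quantum conditional expectation `E(K | A)` with respect to the product state
`ρ^{⊗n}`: the unique linear map sending the elementary tensor `K_1 ⊗ ... ⊗ K_n` to
`(Π_{j ∉ A} Tr(ρ K_j)) · Π_{i ∈ A} K_i^{(i)}`. -/
noncomputable def qCondExp {d n : ℕ} (ρ : Matrix (Fin d) (Fin d) ℂ) (A : Finset (Fin n))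
    (K : Matrix (Fin n → Fin d) (Fin n → Fin d) ℂ) :
    Matrix (Fin n → Fin d) (Fin n → Fin d) ℂ :=
  Matrix.of fun x y =>
    (∏ j ∈ Aᶜ, if x j = y j then (1 : ℂ) else 0) *
      ∑ s : Fin n → Fin d, ∑ t : Fin n → Fin d,
        (if ∀ i ∈ A, s i = x i ∧ t i = y i then (1 : ℂ) else 0) *
          (∏ j ∈ Aᶜ, ρ (t j) (s j)) * K s t

/-- `L²(ρ^{⊗A})`: the linear span of the operators `Π_{i ∈ A} K_i^{(i)}`, i.e. of the
elementary tensors which are the identity outside `A`. -/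
noncomputable def sliceSpan (d n : ℕ) (A : Finset (Fin n)) :
    Submodule ℂ (Matrix (Fin n → Fin d) (Fin n → Fin d) ℂ) :=
  Submodule.span ℂ {T | ∃ M : Fin n → Matrix (Fin d) (Fin d) ℂ,
    (∀ j, j ∉ A → M j = 1) ∧ T = tensorFam M}

section HoeffdingAux

variable {d n : ℕ}

lemma prod_sum_eq (F : Fin n → Fin d → ℂ) :
    (∏ i, ∑ a : Fin d, F i a) = ∑ s : Fin n → Fin d, ∏ i, F i (s i) := by
  rw [Finset.prod_univ_sum, Fintype.piFinset_univ]

lemma sum_sum_prod (F : Fin n → Fin d → Fin d → ℂ) :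
    (∑ s : Fin n → Fin d, ∑ t : Fin n → Fin d, ∏ i, F i (s i) (t i))
      = ∏ i, ∑ a : Fin d, ∑ b : Fin d, F i a b := by
  rw [prod_sum_eq (fun i a => ∑ b, F i a b)]
  refine Finset.sum_congr rfl fun s _ => ?_
  exact (prod_sum_eq (fun i b => F i (s i) b)).symm

lemma tensorFam_mul (M N : Fin n → Matrix (Fin d) (Fin d) ℂ) :
    tensorFam M * tensorFam N = tensorFam fun i => M i * N i := by
  ext x y
  simp only [tensorFam, Matrix.mul_apply, Matrix.of_apply]
  rw [prod_sum_eq (fun i a => M i (x i) a * N i a (y i))]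
  exact Finset.sum_congr rfl fun z _ => (Finset.prod_mul_distrib).symm

lemma tensorFam_conjTranspose (M : Fin n → Matrix (Fin d) (Fin d) ℂ) :
    (tensorFam M)ᴴ = tensorFam fun i => (M i)ᴴ := by
  ext x y
  simp [tensorFam, Matrix.conjTranspose_apply, star_prod]

lemma tensorFam_trace (M : Fin n → Matrix (Fin d) (Fin d) ℂ) :
    (tensorFam M).trace = ∏ i, (M i).trace := by
  simp only [Matrix.trace, Matrix.diag, tensorFam, Matrix.of_apply]
  rw [prod_sum_eq (fun i a => M i a a)]

lemma inner_tensorFam (ρ : Matrix (Fin d) (Fin d) ℂ) (M N : Fin n → Matrix (Fin d) (Fin d) ℂ) :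
    ((tensorFam fun _ : Fin n => ρ) * (tensorFam M)ᴴ * tensorFam N).trace
      = ∏ i, (ρ * (M i)ᴴ * N i).trace := by
  rw [tensorFam_conjTranspose, tensorFam_mul, tensorFam_mul, tensorFam_trace]

lemma qCondExp_tensorFam (ρ : Matrix (Fin d) (Fin d) ℂ) (C : Finset (Fin n))
    (M : Fin n → Matrix (Fin d) (Fin d) ℂ) :
    qCondExp ρ C (tensorFam M) =
      (∏ j ∈ Cᶜ, (ρ * M j).trace) • tensorFam fun i => if i ∈ C then M i else 1 := by
  ext x y
  simp only [qCondExp, tensorFam, Matrix.of_apply, Matrix.smul_apply, smul_eq_mul]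
  have hsum : (∑ s : Fin n → Fin d, ∑ t : Fin n → Fin d,
      (if ∀ i ∈ C, s i = x i ∧ t i = y i then (1:ℂ) else 0) *
        (∏ j ∈ Cᶜ, ρ (t j) (s j)) * ∏ i, M i (s i) (t i))
      = ∏ i, ∑ a : Fin d, ∑ b : Fin d,
          (if i ∈ C then (if a = x i ∧ b = y i then (1:ℂ) else 0) else 1) *
            (if i ∈ Cᶜ then ρ b a else 1) * M i a b := by
    rw [← sum_sum_prod]
    refine Finset.sum_congr rfl fun s _ => Finset.sum_congr rfl fun t _ => ?_
    rw [Finset.prod_mul_distrib, Finset.prod_mul_distrib,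
        Finset.prod_ite_mem Finset.univ C, Finset.univ_inter, Finset.prod_boole,
        Finset.prod_ite_mem Finset.univ Cᶜ, Finset.univ_inter]
    exact congrArg (fun z : ℂ => (z * ∏ j ∈ Cᶜ, ρ (t j) (s j)) * ∏ i : Fin n, M i (s i) (t i))
      (by congr)
  rw [hsum]
  have hC : ∀ i ∈ C, (∑ a : Fin d, ∑ b : Fin d,
      (if i ∈ C then (if a = x i ∧ b = y i then (1:ℂ) else 0) else 1) *
        (if i ∈ Cᶜ then ρ b a else 1) * M i a b) = M i (x i) (y i) := by
    intro i hi
    simp [hi, Finset.mem_compl, ite_and]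
  have hCc : ∀ i ∈ Cᶜ, (∑ a : Fin d, ∑ b : Fin d,
      (if i ∈ C then (if a = x i ∧ b = y i then (1:ℂ) else 0) else 1) *
        (if i ∈ Cᶜ then ρ b a else 1) * M i a b) = (ρ * M i).trace := by
    intro i hi
    have hi' : i ∉ C := Finset.mem_compl.mp hi
    simp only [hi', if_false, hi, if_true, one_mul]
    rw [Matrix.trace, Finset.sum_comm]
    simp [Matrix.mul_apply, Matrix.diag]
  rw [← Finset.prod_mul_prod_compl C (fun i => ∑ a : Fin d, ∑ b : Fin d,
      (if i ∈ C then (if a = x i ∧ b = y i then (1:ℂ) else 0) else 1) *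
        (if i ∈ Cᶜ then ρ b a else 1) * M i a b),
      Finset.prod_congr rfl hC, Finset.prod_congr rfl hCc,
      ← Finset.prod_mul_prod_compl C (fun i => (if i ∈ C then M i else 1) (x i) (y i))]
  have h1 : ∏ i ∈ C, (if i ∈ C then M i else 1) (x i) (y i) = ∏ i ∈ C, M i (x i) (y i) :=
    Finset.prod_congr rfl fun i hi => by simp [hi]
  have h2 : ∏ i ∈ Cᶜ, (if i ∈ C then M i else 1) (x i) (y i)
      = ∏ i ∈ Cᶜ, if x i = y i then (1:ℂ) else 0 :=
    Finset.prod_congr rfl fun i hi => by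
      simp [Finset.mem_compl.mp hi, Matrix.one_apply]
  rw [h1, h2]
  ring

lemma qCondExp_zero (ρ : Matrix (Fin d) (Fin d) ℂ) (C : Finset (Fin n)) :
    qCondExp ρ C (0 : Matrix (Fin n → Fin d) (Fin n → Fin d) ℂ) = 0 := by
  ext x y
  simp [qCondExp]

lemma qCondExp_add (ρ : Matrix (Fin d) (Fin d) ℂ) (C : Finset (Fin n))
    (K L : Matrix (Fin n → Fin d) (Fin n → Fin d) ℂ) :
    qCondExp ρ C (K + L) = qCondExp ρ C K + qCondExp ρ C L := by
  ext x y
  simp only [qCondExp, Matrix.add_apply, Matrix.of_apply]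
  rw [← mul_add, ← Finset.sum_add_distrib]
  congr 1
  refine Finset.sum_congr rfl fun s _ => ?_
  rw [← Finset.sum_add_distrib]
  exact Finset.sum_congr rfl fun t _ => by ring

lemma qCondExp_smul (ρ : Matrix (Fin d) (Fin d) ℂ) (C : Finset (Fin n)) (c : ℂ)
    (K : Matrix (Fin n → Fin d) (Fin n → Fin d) ℂ) :
    qCondExp ρ C (c • K) = c • qCondExp ρ C K := by
  ext x y
  simp only [qCondExp, Matrix.smul_apply, Matrix.of_apply, smul_eq_mul, Finset.mul_sum]
  refine Finset.sum_congr rfl fun s _ => Finset.sum_congr rfl fun t _ => by ring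

lemma key_elem (ρ : Matrix (Fin d) (Fin d) ℂ) (hρtr : ρ.trace = 1)
    (A B : Finset (Fin n)) (M N : Fin n → Matrix (Fin d) (Fin d) ℂ)
    (hM : ∀ j, j ∉ A → M j = 1) (hN : ∀ j, j ∉ B → N j = 1) :
    ((tensorFam fun _ : Fin n => ρ) * (tensorFam M)ᴴ * tensorFam N).trace
      = ((tensorFam fun _ : Fin n => ρ) * (tensorFam M)ᴴ *
          qCondExp ρ (A ∩ B) (tensorFam N)).trace := by
  rw [qCondExp_tensorFam, Matrix.mul_smul, Matrix.trace_smul, inner_tensorFam, inner_tensorFam,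
    smul_eq_mul]
  have hcompl : (∏ j ∈ (A ∩ B)ᶜ, (ρ * N j).trace)
      = ∏ j, if j ∈ (A ∩ B)ᶜ then (ρ * N j).trace else 1 := by
    rw [Finset.prod_ite_mem, Finset.univ_inter]
  rw [hcompl, ← Finset.prod_mul_distrib]
  refine Finset.prod_congr rfl fun i _ => ?_
  by_cases hiA : i ∈ A <;> by_cases hiB : i ∈ B
  · simp [Finset.mem_compl, Finset.mem_inter, hiA, hiB]
  · simp [Finset.mem_compl, Finset.mem_inter, hiA, hiB, hN i hiB, hρtr]
  · simp [Finset.mem_compl, Finset.mem_inter, hiA, hiB, hM i hiA, hρtr]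
  · simp [Finset.mem_compl, Finset.mem_inter, hiA, hiB, hM i hiA, hN i hiB, hρtr]

lemma key_full (ρ : Matrix (Fin d) (Fin d) ℂ) (hρtr : ρ.trace = 1)
    (A B : Finset (Fin n)) (K K' : Matrix (Fin n → Fin d) (Fin n → Fin d) ℂ)
    (hK : K ∈ sliceSpan d n A) (hK' : K' ∈ sliceSpan d n B) :
    ((tensorFam fun _ : Fin n => ρ) * Kᴴ * K').trace
      = ((tensorFam fun _ : Fin n => ρ) * Kᴴ * qCondExp ρ (A ∩ B) K').trace := by
  have step1 : ∀ M : Fin n → Matrix (Fin d) (Fin d) ℂ, (∀ j, j ∉ A → M j = 1) →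
      ((tensorFam fun _ : Fin n => ρ) * (tensorFam M)ᴴ * K').trace
        = ((tensorFam fun _ : Fin n => ρ) * (tensorFam M)ᴴ * qCondExp ρ (A ∩ B) K').trace := by
    intro M hM
    have hK'' : K' ∈ Submodule.span ℂ {T | ∃ N : Fin n → Matrix (Fin d) (Fin d) ℂ,
        (∀ j, j ∉ B → N j = 1) ∧ T = tensorFam N} := hK'
    clear hK'
    induction hK'' using Submodule.span_induction with
    | mem T hT =>
      obtain ⟨N, hN, rfl⟩ := hT
      exact key_elem ρ hρtr A B M N hM hN
    | zero => simp [qCondExp_zero]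
    | add T U _ _ ihT ihU => rw [qCondExp_add, mul_add, mul_add, Matrix.trace_add,
        Matrix.trace_add, ihT, ihU]
    | smul c T _ ih => rw [qCondExp_smul, Matrix.mul_smul, Matrix.mul_smul,
        Matrix.trace_smul, Matrix.trace_smul, ih]
  have hK2 : K ∈ Submodule.span ℂ {T | ∃ M : Fin n → Matrix (Fin d) (Fin d) ℂ,
      (∀ j, j ∉ A → M j = 1) ∧ T = tensorFam M} := hK
  clear hK
  induction hK2 using Submodule.span_induction with
  | mem T hT =>
    obtain ⟨M, hM, rfl⟩ := hT
    exact step1 M hM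
  | zero => simp
  | add T U _ _ ihT ihU => rw [Matrix.conjTranspose_add, mul_add, add_mul, add_mul,
      Matrix.trace_add, Matrix.trace_add, ihT, ihU]
  | smul c T _ ih => rw [Matrix.conjTranspose_smul, Matrix.mul_smul, Matrix.smul_mul,
      Matrix.smul_mul, Matrix.trace_smul, Matrix.trace_smul, ih]

lemma main_half (ρ : Matrix (Fin d) (Fin d) ℂ) (hρtr : ρ.trace = 1)
    (A B : Finset (Fin n)) (h : (A ∩ B).card < B.card)
    (K K' : Matrix (Fin n → Fin d) (Fin n → Fin d) ℂ)
    (hK : K ∈ sliceSpan d n A) (hK' : K' ∈ sliceSpan d n B)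
    (hK'deg : ∀ C : Finset (Fin n), C.card < B.card → qCondExp ρ C K' = 0) :
    ((tensorFam fun _ : Fin n => ρ) * Kᴴ * K').trace = 0 := by
  rw [key_full ρ hρtr A B K K' hK hK', hK'deg (A ∩ B) h, Matrix.mul_zero, Matrix.trace_zero]

end HoeffdingAux

/-- **Mutual orthogonality of the Hoeffding subspaces `H_A`.**
`H_A` consists of the `K ∈ L²(ρ^{⊗A})` with `E(K|B) = 0` for all `B` with `|B| < |A|`. -/
theorem stmt7 {d n : ℕ} (ρ : Matrix (Fin d) (Fin d) ℂ)
    (hρ : ρ.PosDef) (hρtr : ρ.trace = 1)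
    (A B : Finset (Fin n)) (hAB : A ≠ B)
    (K K' : Matrix (Fin n → Fin d) (Fin n → Fin d) ℂ)
    (hK : K ∈ sliceSpan d n A)
    (hKdeg : ∀ C : Finset (Fin n), C.card < A.card → qCondExp ρ C K = 0)
    (hK' : K' ∈ sliceSpan d n B)
    (hK'deg : ∀ C : Finset (Fin n), C.card < B.card → qCondExp ρ C K' = 0) :
    ((tensorFam fun _ : Fin n => ρ) * Kᴴ * K').trace = 0 := by
  rcases lt_or_ge (A ∩ B).card B.card with h | h
  · exact main_half ρ hρtr A B h K K' hK hK' hK'deg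
  · have hAB' : A ∩ B = B := Finset.eq_of_subset_of_card_le Finset.inter_subset_right h
    have hBA : B ⊆ A := hAB' ▸ Finset.inter_subset_left
    have hlt : (B ∩ A).card < A.card := by
      rw [Finset.inter_eq_left.mpr hBA]
      exact Finset.card_lt_card (Finset.ssubset_iff_subset_ne.mpr ⟨hBA, hAB.symm⟩)
    have h0 : ((tensorFam fun _ : Fin n => ρ) * K'ᴴ * K).trace = 0 :=
      main_half ρ hρtr B A hlt K' K hK' hK hKdeg
    have hP : (tensorFam fun _ : Fin n => ρ)ᴴ = tensorFam fun _ : Fin n => ρ := by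
      rw [tensorFam_conjTranspose]
      simp [hρ.1.eq]
    have hconj : ((tensorFam fun _ : Fin n => ρ) * Kᴴ * K').trace
        = star ((tensorFam fun _ : Fin n => ρ) * K'ᴴ * K).trace := by
      rw [← Matrix.trace_conjTranspose, Matrix.conjTranspose_mul, Matrix.conjTranspose_mul,
        Matrix.conjTranspose_conjTranspose, hP, ← Matrix.mul_assoc,
        Matrix.trace_mul_comm (Kᴴ * K'), ← Matrix.mul_assoc]
    rw [hconj, h0, star_zero]
end

section
/- Let ρ = diag(μ_1,...,μ_d) with μ_1 > μ_2 > ... > μ_d > 0 and Σμ_i = 1. Define d_i := E_{ii} − μ_i·1 for 1 ≤ i ≤ d−1; for 1 ≤ j < k ≤ d define T_{jk} := i(E_{jk} − E_{kj}) and T_{kj} := E_{jk} + E_{kj}, and for j ≠ k set t_{jk} := T_{jk}/√(2|μ_j − μ_k|). Then: (i) Tr(ρ (d_i ∘ d_j)) = δ_{ij} μ_i − μ_i μ_j for 1 ≤ i,j ≤ d−1; (ii) for j < k, (i/2) Tr(ρ [t_{jk}, t_{kj}]) = −1/2, and (i/2) Tr(ρ [t_{jk}, t_{lm}]) = 0 whenever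 {j,k} ≠ {l,m}; (iii) for j ≠ k, Tr(ρ t_{jk}²) = (μ_j + μ_k)/(2|μ_j − μ_k|) > 1/2. -/
open scoped BigOperators
open Matrix

/-- `d_i := E_{ii} − μ_i·1`. -/
noncomputable def dMat {d : ℕ} (μ : Fin d → ℝ) (i : Fin d) : Matrix (Fin d) (Fin d) ℂ :=
  Matrix.single i i 1 - (μ i : ℂ) • (1 : Matrix (Fin d) (Fin d) ℂ)

/-- For `j < k`, `T_{jk} := i(E_{jk} − E_{kj})`, and `T_{kj} := E_{jk} + E_{kj}`. -/
noncomputable def TMat {d : ℕ} (a b : Fin d) : Matrix (Fin d) (Fin d) ℂ :=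
  if a < b then
    Complex.I • (Matrix.single a b 1 - Matrix.single b a 1)
  else
    Matrix.single b a 1 + Matrix.single a b 1

/-- `t_{jk} := T_{jk}/√(2|μ_j − μ_k|)`. -/
noncomputable def tMat {d : ℕ} (μ : Fin d → ℝ) (a b : Fin d) :
    Matrix (Fin d) (Fin d) ℂ :=
  (Real.sqrt (2 * |μ a - μ b|))⁻¹ • TMat a b

/-!
Everything reduces to `Tr(diag f · E_ab E_ce) = δ_bc δ_ea f_a`. Each `T_jk` is a combination of
`E_jk` and `E_kj`, so the `ρ`-expectation of a product of two of them vanishes unless both belong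
to the same pair `{j, k}`. For the same pair, `[T_jk, T_kj] = 2i (E_jj - E_kk)` and
`T_jk² = E_jj + E_kk`; the normalisation `√(2|μ_j - μ_k|)` is exactly what turns the first
into `-1/2`.
-/

section single

variable {n R : Type*} [Fintype n] [DecidableEq n] [CommSemiring R] (f : n → R)

theorem trace_diagonal_mul_single (a b : n) :
    (diagonal f * single a b 1).trace = if a = b then f a else 0 := by
  rw [trace_mul_single, diagonal_apply]
  split_ifs <;> simp_all [eq_comm]

theorem trace_diagonal_mul_single_mul_single (a b c e : n) :
    (diagonal f * (single a b 1 * single c e 1)).trace = if b = c ∧ e = a then f a else 0 := by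
  rcases eq_or_ne b c with rfl | hbc
  · rw [single_mul_single_same, one_mul, trace_diagonal_mul_single]
    simp [eq_comm]
  · simp [single_mul_single_of_ne _ _ _ _ hbc, hbc]

theorem trace_diagonal_mul_single_mul_single_of_pair_ne {a b c e : n}
    (h : ({a, b} : Finset n) ≠ {c, e}) :
    (diagonal f * (single a b 1 * single c e 1)).trace = 0 := by
  rw [trace_diagonal_mul_single_mul_single, if_neg]
  rintro ⟨rfl, rfl⟩
  exact h (Finset.pair_comm _ _)

end single

noncomputable def symplecticForm {n : Type*} [Fintype n] (ρ A B : Matrix n n ℂ) : ℂ :=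
  Complex.I / 2 * (ρ * (A * B - B * A)).trace

section

variable {d : ℕ}

theorem trace_diagonal_mul_jordan_dMat {μ : Fin d → ℝ} (hsum : ∑ i, μ i = 1) (i j : Fin d) :
    (diagonal (fun i => (μ i : ℂ)) *
        ((2 : ℂ)⁻¹ • (dMat μ i * dMat μ j + dMat μ j * dMat μ i))).trace =
      (if i = j then (μ i : ℂ) else 0) - (μ i : ℂ) * (μ j : ℂ) := by
  have htrace : (diagonal fun i => (μ i : ℂ)).trace = 1 := by
    rw [trace_diagonal]
    exact_mod_cast hsum
  simp only [dMat, sub_mul, mul_sub, mul_add, smul_mul_assoc, mul_smul_comm, one_mul, mul_one,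
    trace_sub, trace_add, trace_smul, trace_diagonal_mul_single_mul_single,
    trace_diagonal_mul_single, htrace, smul_eq_mul]
  rcases eq_or_ne i j with rfl | h
  · simp only [and_self, if_true]
    ring
  · simp only [h, h.symm, and_false, if_false, if_true]
    ring

theorem TMat_commutator_of_lt {j k : Fin d} (h : j < k) :
    TMat j k * TMat k j - TMat k j * TMat j k =
      (2 * Complex.I) • (single j j 1 - single k k 1) := by
  simp only [TMat, if_pos h, if_neg (not_lt.mpr h.le), smul_mul_assoc, mul_smul_comm, sub_mul,
    mul_sub, add_mul, mul_add, single_mul_single_same, single_mul_single_of_ne _ _ _ _ h.ne,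
    single_mul_single_of_ne _ _ _ _ h.ne', one_mul]
  module

theorem TMat_mul_self {a b : Fin d} (h : a ≠ b) :
    TMat a b * TMat a b = single a a 1 + single b b 1 := by
  unfold TMat
  split_ifs
  · simp only [smul_mul_smul_comm, Complex.I_mul_I, sub_mul, mul_sub, single_mul_single_same,
      single_mul_single_of_ne _ _ _ _ h, single_mul_single_of_ne _ _ _ _ h.symm, one_mul]
    module
  · simp only [add_mul, mul_add, single_mul_single_same,
      single_mul_single_of_ne _ _ _ _ h, single_mul_single_of_ne _ _ _ _ h.symm, one_mul]
    abel

theorem exists_TMat_eq (a b : Fin d) :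
    ∃ x y : ℂ, TMat a b = x • single a b 1 + y • single b a 1 := by
  unfold TMat
  split_ifs
  · exact ⟨Complex.I, -Complex.I, by module⟩
  · exact ⟨1, 1, by module⟩

theorem trace_diagonal_mul_TMat_mul_TMat_of_pair_ne (f : Fin d → ℂ) {a b c e : Fin d}
    (h : ({a, b} : Finset (Fin d)) ≠ {c, e}) :
    (diagonal f * (TMat a b * TMat c e)).trace = 0 := by
  obtain ⟨x, y, hab⟩ := exists_TMat_eq a b
  obtain ⟨z, w, hce⟩ := exists_TMat_eq c e
  have hba : ({b, a} : Finset (Fin d)) ≠ {c, e} := Finset.pair_comm a b ▸ h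
  have hec : ({a, b} : Finset (Fin d)) ≠ {e, c} := Finset.pair_comm c e ▸ h
  have hba_ec : ({b, a} : Finset (Fin d)) ≠ {e, c} := Finset.pair_comm c e ▸ hba
  simp only [hab, hce, add_mul, mul_add, smul_mul_smul_comm, Matrix.mul_smul, trace_add,
    trace_smul, trace_diagonal_mul_single_mul_single_of_pair_ne f h,
    trace_diagonal_mul_single_mul_single_of_pair_ne f hba,
    trace_diagonal_mul_single_mul_single_of_pair_ne f hec,
    trace_diagonal_mul_single_mul_single_of_pair_ne f hba_ec, smul_zero, add_zero]

theorem tMat_mul_tMat (μ : Fin d → ℝ) (a b c e : Fin d) :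
    tMat μ a b * tMat μ c e =
      ((√(2 * |μ a - μ b|))⁻¹ * (√(2 * |μ c - μ e|))⁻¹) • (TMat a b * TMat c e) :=
  smul_mul_smul_comm _ _ _ _

theorem tMat_commutator (μ : Fin d → ℝ) (a b c e : Fin d) :
    tMat μ a b * tMat μ c e - tMat μ c e * tMat μ a b =
      ((√(2 * |μ a - μ b|))⁻¹ * (√(2 * |μ c - μ e|))⁻¹) •
        (TMat a b * TMat c e - TMat c e * TMat a b) := by
  rw [tMat_mul_tMat, tMat_mul_tMat, mul_comm (√(2 * |μ c - μ e|))⁻¹, smul_sub]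

theorem symplecticForm_tMat_of_lt {μ : Fin d → ℝ} {j k : Fin d} (h : j < k)
    (hμ : μ k < μ j) :
    symplecticForm (diagonal fun i => (μ i : ℂ)) (tMat μ j k) (tMat μ k j) = -(1 / 2) := by
  have hμ' : (μ j : ℂ) - μ k ≠ 0 := by exact_mod_cast (sub_pos.mpr hμ).ne'
  rw [symplecticForm, tMat_commutator, TMat_commutator_of_lt h, abs_sub_comm (μ k),
    ← mul_inv, Real.mul_self_sqrt (by positivity), abs_of_pos (sub_pos.mpr hμ)]
  simp only [Matrix.mul_smul, mul_sub, trace_smul, trace_sub, trace_diagonal_mul_single,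
    if_true, smul_eq_mul, Complex.real_smul]
  push_cast
  field_simp
  exact Complex.I_sq

theorem symplecticForm_tMat_of_pair_ne (f : Fin d → ℂ) (μ : Fin d → ℝ) {j k l m : Fin d}
    (h : ({j, k} : Finset (Fin d)) ≠ {l, m}) :
    symplecticForm (diagonal f) (tMat μ j k) (tMat μ l m) = 0 := by
  rw [symplecticForm, tMat_commutator, Matrix.mul_smul, trace_smul, mul_sub, trace_sub,
    trace_diagonal_mul_TMat_mul_TMat_of_pair_ne f h,
    trace_diagonal_mul_TMat_mul_TMat_of_pair_ne f h.symm]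
  simp

theorem trace_diagonal_mul_tMat_mul_self {μ : Fin d → ℝ} {a b : Fin d} (h : μ a ≠ μ b) :
    (diagonal (fun i => (μ i : ℂ)) * (tMat μ a b * tMat μ a b)).trace =
      (((μ a + μ b) / (2 * |μ a - μ b|) : ℝ) : ℂ) := by
  have hpos : 0 < 2 * |μ a - μ b| := by
    have := sub_ne_zero.mpr h
    positivity
  rw [tMat_mul_tMat, TMat_mul_self (ne_of_apply_ne μ h), ← mul_inv, Real.mul_self_sqrt hpos.le,
    Matrix.mul_smul, trace_smul, mul_add, trace_add, trace_diagonal_mul_single,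
    trace_diagonal_mul_single, if_pos rfl, if_pos rfl, Complex.real_smul]
  push_cast
  field_simp

end

theorem one_half_lt_add_div_two_mul_abs_sub {x y : ℝ} (hx : 0 < x) (hy : 0 < y) (hxy : x ≠ y) :
    1 / 2 < (x + y) / (2 * |x - y|) := by
  have hpos : 0 < 2 * |x - y| := by
    have := sub_ne_zero.mpr hxy
    positivity
  rw [div_lt_div_iff₀ two_pos hpos]
  have : |x - y| < x + y := abs_sub_lt_iff.mpr ⟨by linarith, by linarith⟩
  linarith

/-- **The ortho-symplectic basis associated to a non-degenerate density matrix:**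
covariances of the classical part, symplectic relations, and thermal variances. -/
theorem stmt16 {d : ℕ} (μ : Fin d → ℝ)
    (hdec : StrictAnti μ) (hpos : ∀ i, 0 < μ i) (hsum : ∑ i, μ i = 1)
    (ρ : Matrix (Fin d) (Fin d) ℂ)
    (hρ : ρ = Matrix.diagonal fun i => (μ i : ℂ)) :
    -- (i) covariance matrix of the classical part
    (∀ i j : Fin d, (i : ℕ) < d - 1 → (j : ℕ) < d - 1 →
      (ρ * ((2 : ℂ)⁻¹ • (dMat μ i * dMat μ j + dMat μ j * dMat μ i))).trace =
        (if i = j then (μ i : ℂ) else 0) - (μ i : ℂ) * (μ j : ℂ)) ∧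
    -- (ii) the basis is symplectic
    (∀ j k : Fin d, j < k →
      (Complex.I / 2) *
        (ρ * (tMat μ j k * tMat μ k j - tMat μ k j * tMat μ j k)).trace = -(1 / 2)) ∧
    (∀ j k l m : Fin d, j ≠ k → l ≠ m → ({j, k} : Finset (Fin d)) ≠ {l, m} →
      (Complex.I / 2) *
        (ρ * (tMat μ j k * tMat μ l m - tMat μ l m * tMat μ j k)).trace = 0) ∧
    -- (iii) thermal variances
    (∀ j k : Fin d, j ≠ k →
      (ρ * (tMat μ j k * tMat μ j k)).trace =
          (((μ j + μ k) / (2 * |μ j - μ k|) : ℝ) : ℂ) ∧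
        1 / 2 < (μ j + μ k) / (2 * |μ j - μ k|)) := by
  subst hρ
  refine ⟨fun i j _ _ => trace_diagonal_mul_jordan_dMat hsum i j,
    fun j k h => symplecticForm_tMat_of_lt h (hdec h),
    fun j k l m _ _ h => symplecticForm_tMat_of_pair_ne _ μ h,
    fun j k h => ?_⟩
  have hμ : μ j ≠ μ k := hdec.injective.ne h
  exact ⟨trace_diagonal_mul_tMat_mul_self hμ,
    one_half_lt_add_div_two_mul_abs_sub (hpos j) (hpos k) hμ⟩
end

section
/- Let ρ = diag(λ_1,...,λ_d) be a diagonal density matrix on ℂ^d and define the selfadjoint operator K on ℂ^d ⊗ ℂ^d by K := Σ_{i=1}^{d} (λ_i·1 − E_{ii}) ⊗ (λ_i·1 − E_{ii}) + (1/2) Σ_{1 ≤ j ≠ k ≤ d} T_{jk} ⊗ T_{jk}, where for j < k, T_{jk} := i(E_{jk} − E_{kj}) and T_{kj} := E_{jk} + E_{kj}. Then for every density matrix σ on ℂ^d: Tr( (σ ⊗ σ) K ) = ‖σ − ρ‖₂², the squared Hilbert–Schmidt (Frobenius) norm of σ − ρ. -/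
/-!
Since `Tr((σ ⊗ σ)(A ⊗ A)) = Tr(σA)²`, the diagonal part of `K` contributes
`Σᵢ (λᵢ Tr σ − σᵢᵢ)² = Σᵢ (σᵢᵢ − λᵢ)²`, while each pair `T_{jk}, T_{kj}` contributes
`Tr(σT_{jk})² + Tr(σT_{kj})² = 4 σ_{jk} σ_{kj}`, the imaginary unit in `T_{jk}` turning the
square of the antisymmetric part into the correct sign. For hermitian `σ` these are exactly
the diagonal and off-diagonal terms of `Tr((σ − ρ)²)`.
-/

open scoped BigOperators Kronecker
open Matrix
open scoped ComplexOrder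

theorem Finset.sum_sum_erase_comm {ι M : Type*} [Fintype ι] [DecidableEq ι] [AddCommMonoid M]
    (f : ι → ι → M) :
    ∑ j, ∑ k ∈ univ.erase j, f j k = ∑ j, ∑ k ∈ univ.erase j, f k j :=
  Finset.sum_comm' fun _ _ => by simp [eq_comm]

namespace Matrix

variable {n R : Type*} [Fintype n]

theorem trace_kronecker_mul_kronecker {m : Type*} [Fintype m] [CommSemiring R]
    (A C : Matrix n n R) (B D : Matrix m m R) :
    ((A ⊗ₖ B) * (C ⊗ₖ D)).trace = (A * C).trace * (B * D).trace := by
  rw [← mul_kronecker_mul, trace_kronecker]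

variable [DecidableEq n] [CommRing R]

theorem trace_mul_smul_one_sub_single (A : Matrix n n R) (c : R) (i : n) :
    (A * (c • (1 : Matrix n n R) - single i i 1)).trace = c * A.trace - A i i := by
  simp [mul_sub, trace_sub, trace_mul_single]

theorem trace_sub_diagonal_mul_self (A : Matrix n n R) (v : n → R) :
    ((A - diagonal v) * (A - diagonal v)).trace =
      ∑ i, ((A i i - v i) ^ 2 + ∑ k ∈ Finset.univ.erase i, A i k * A k i) := by
  refine Finset.sum_congr rfl fun i _ => ?_
  rw [diag_apply, mul_apply, ← Finset.add_sum_erase _ _ (Finset.mem_univ i)]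
  congr 1
  · simp [sq]
  · refine Finset.sum_congr rfl fun k hk => ?_
    have hki : k ≠ i := Finset.ne_of_mem_erase hk
    simp [diagonal_apply_ne _ hki, diagonal_apply_ne _ hki.symm]

end Matrix

lemma trace_mul_TMat {d : ℕ} (σ : Matrix (Fin d) (Fin d) ℂ) (j k : Fin d) :
    (σ * TMat j k).trace =
      if j < k then Complex.I * (σ k j - σ j k) else σ k j + σ j k := by
  unfold TMat
  split_ifs <;> simp [mul_sub, mul_add, trace_sub, trace_add, trace_mul_single, add_comm]

lemma trace_mul_TMat_sq_add_swap {d : ℕ} (σ : Matrix (Fin d) (Fin d) ℂ) {j k : Fin d}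
    (h : j ≠ k) :
    (σ * TMat j k).trace ^ 2 + (σ * TMat k j).trace ^ 2 = 4 * (σ j k * σ k j) := by
  rw [trace_mul_TMat, trace_mul_TMat]
  rcases h.lt_or_gt with h' | h'
  · rw [if_pos h', if_neg h'.not_gt]
    linear_combination (σ k j - σ j k) ^ 2 * Complex.I_sq
  · rw [if_neg h'.not_gt, if_pos h']
    linear_combination (σ j k - σ k j) ^ 2 * Complex.I_sq

lemma sum_trace_mul_TMat_sq {d : ℕ} (σ : Matrix (Fin d) (Fin d) ℂ) :
    ∑ j, ∑ k ∈ Finset.univ.erase j, (σ * TMat j k).trace ^ 2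
      = 2 * ∑ j, ∑ k ∈ Finset.univ.erase j, σ j k * σ k j := by
  have hpair : ∀ j, ∀ k ∈ Finset.univ.erase j,
      (σ * TMat j k).trace ^ 2 + (σ * TMat k j).trace ^ 2 = 4 * (σ j k * σ k j) :=
    fun j k hk => trace_mul_TMat_sq_add_swap σ (Finset.ne_of_mem_erase hk).symm
  have hdouble : ∑ j, ∑ k ∈ Finset.univ.erase j,
      ((σ * TMat j k).trace ^ 2 + (σ * TMat k j).trace ^ 2) =
      ∑ j, ∑ k ∈ Finset.univ.erase j, 4 * (σ j k * σ k j) :=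
    Finset.sum_congr rfl fun j _ => Finset.sum_congr rfl (hpair j)
  simp only [Finset.sum_add_distrib, ← Finset.mul_sum] at hdouble
  have hswap := Finset.sum_sum_erase_comm fun j k => (σ * TMat j k).trace ^ 2
  linear_combination (hdouble + hswap) / 2

theorem stmt18_general {d : ℕ} (lam : Fin d → ℝ)
    (ρ : Matrix (Fin d) (Fin d) ℂ)
    (hρ : ρ = Matrix.diagonal fun i => (lam i : ℂ))
    (K : Matrix (Fin d × Fin d) (Fin d × Fin d) ℂ)
    (hK : K =
      (∑ i : Fin d,
        ((lam i : ℂ) • (1 : Matrix (Fin d) (Fin d) ℂ) - Matrix.single i i 1) ⊗ₖ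
          ((lam i : ℂ) • (1 : Matrix (Fin d) (Fin d) ℂ) - Matrix.single i i 1)) +
        (2 : ℂ)⁻¹ • ∑ j : Fin d, ∑ k ∈ Finset.univ.erase j, TMat j k ⊗ₖ TMat j k)
    (σ : Matrix (Fin d) (Fin d) ℂ)
    (hσ : σ.PosSemidef) (hσtr : σ.trace = 1) :
    ((σ ⊗ₖ σ) * K).trace = ((σ - ρ)ᴴ * (σ - ρ)).trace := by
  have hρ_herm : ρ.IsHermitian :=
    hρ ▸ isHermitian_diagonal_iff.mpr fun i => Complex.conj_ofReal (lam i)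
  rw [(hσ.isHermitian.sub hρ_herm).eq, hρ, trace_sub_diagonal_mul_self, hK,
    mul_add, Matrix.mul_smul, trace_add, trace_smul]
  simp only [Finset.mul_sum, trace_sum, trace_kronecker_mul_kronecker,
    trace_mul_smul_one_sub_single, hσtr, mul_one, ← sq]
  rw [sum_trace_mul_TMat_sq, smul_eq_mul, inv_mul_cancel_left₀ two_ne_zero,
    Finset.sum_add_distrib]
  simp only [sub_sq_comm]

/-- **An unbiased estimator of the squared Hilbert–Schmidt distance to a fixed diagonal
state:** `Tr((σ ⊗ σ) K) = ‖σ − ρ‖₂²` for every density matrix `σ`. -/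
theorem stmt18 {d : ℕ} (lam : Fin d → ℝ)
    (hlam : ∀ i, 0 ≤ lam i) (hlamsum : ∑ i, lam i = 1)
    (ρ : Matrix (Fin d) (Fin d) ℂ)
    (hρ : ρ = Matrix.diagonal fun i => (lam i : ℂ))
    (K : Matrix (Fin d × Fin d) (Fin d × Fin d) ℂ)
    (hK : K =
      (∑ i : Fin d,
        ((lam i : ℂ) • (1 : Matrix (Fin d) (Fin d) ℂ) - Matrix.single i i 1) ⊗ₖ
          ((lam i : ℂ) • (1 : Matrix (Fin d) (Fin d) ℂ) - Matrix.single i i 1)) +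
        (2 : ℂ)⁻¹ • ∑ j : Fin d, ∑ k ∈ Finset.univ.erase j, TMat j k ⊗ₖ TMat j k)
    (σ : Matrix (Fin d) (Fin d) ℂ)
    (hσ : σ.PosSemidef) (hσtr : σ.trace = 1) :
    ((σ ⊗ₖ σ) * K).trace = ((σ - ρ)ᴴ * (σ - ρ)).trace :=
  stmt18_general lam ρ hρ K hK σ hσ hσtr
end
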